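/- Theorem 1: S^BiD = S^BiD-q, i.e., sInf A = sInf B. Problem BiD (jointly optimizing nonnegative multi-segment bidding prices and quantities of the VRE day-ahead bidding curves so as to minimize the expected total system cost over lower-level-optimal day-ahead schedules) and Problem BiD-q (optimizing only a single nonnegative bid quantity per VRE unit–hour at zero bid price) achieve the same expected system cost. -/

import Mathlib

open Finset

/-- Feasibility for the priced day-ahead problem DA(C,W): the non-VRE decision `x`
together with the aggregate VRE dispatch lies in `Y`, and each segment dispatch
lies between `0` and the bid quantity `W k s`. -/
def DAFeasible {n : ℕ} {K S : Type*} [Fintype S]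
    (Y : Set ((Fin n → ℝ) × (K → ℝ)))
    (W : K → S → ℝ) (x : Fin n → ℝ) (p : K → S → ℝ) : Prop :=
  ((x, fun k => ∑ s, p k s) ∈ Y) ∧ ∀ k s, 0 ≤ p k s ∧ p k s ≤ W k s

/-- Optimality for the priced day-ahead problem DA(C,W): feasible and minimizing
`f0 x + Σ_k Σ_s C k s * p k s` over all feasible pairs. -/
def DAOptimal {n : ℕ} {K S : Type*} [Fintype K] [Fintype S]
    (Y : Set ((Fin n → ℝ) × (K → ℝ))) (f0 : (Fin n → ℝ) → ℝ)
    (C W : K → S → ℝ) (x : Fin n → ℝ) (p : K → S → ℝ) : Prop :=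
  DAFeasible Y W x p ∧
    ∀ x' p', DAFeasible Y W x' p' →
      f0 x + ∑ k, ∑ s, C k s * p k s ≤ f0 x' + ∑ k, ∑ s, C k s * p' k s

/-- Feasibility for the quantity-only day-ahead problem DA0(W'). -/
def DA0Feasible {n : ℕ} {K : Type*}
    (Y : Set ((Fin n → ℝ) × (K → ℝ)))
    (W' : K → ℝ) (x : Fin n → ℝ) (q : K → ℝ) : Prop :=
  ((x, q) ∈ Y) ∧ ∀ k, 0 ≤ q k ∧ q k ≤ W' k

/-- Optimality for the quantity-only day-ahead problem DA0(W'): feasible and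
minimizing `f0 x` over all feasible pairs. -/
def DA0Optimal {n : ℕ} {K : Type*}
    (Y : Set ((Fin n → ℝ) × (K → ℝ))) (f0 : (Fin n → ℝ) → ℝ)
    (W' : K → ℝ) (x : Fin n → ℝ) (q : K → ℝ) : Prop :=
  DA0Feasible Y W' x q ∧ ∀ x' q', DA0Feasible Y W' x' q' → f0 x ≤ f0 x'

/-!
A bid curve with nonnegative prices never does better than a price-free quantity bid: given a
DA-optimal schedule `(x, p)`, offering the cleared quantities `∑ s, p k s` at price zero makes
`(x, ∑ s, p k s)` DA0-optimal, because any competing DA0-feasible dispatch can be split across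
the segments below `p` and then costs no more in the priced problem. Conversely a quantity bid
is a one-segment bid curve at price zero. So both problems reach the same set of day-ahead
outcomes, and hence the same infimum of expected cost.
-/

theorem exists_le_sum_eq {𝕜 S : Type*} [Field 𝕜] [LinearOrder 𝕜] [IsStrictOrderedRing 𝕜]
    [Fintype S] {p : S → 𝕜} (hp : ∀ s, 0 ≤ p s) {q : 𝕜} (hq₀ : 0 ≤ q) (hq : q ≤ ∑ s, p s) :
    ∃ p' : S → 𝕜, (∀ s, 0 ≤ p' s) ∧ (∀ s, p' s ≤ p s) ∧ ∑ s, p' s = q := by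
  have hsum : 0 ≤ ∑ s, p s := sum_nonneg fun s _ => hp s
  -- Proportional split; if `∑ s, p s = 0` then `q = 0` and the junk value `q / 0 = 0` is right.
  refine ⟨fun s => q / (∑ t, p t) * p s, fun s => mul_nonneg (div_nonneg hq₀ hsum) (hp s),
    fun s => mul_le_of_le_one_left (hp s) (div_le_one_of_le₀ hq hsum), ?_⟩
  rw [← mul_sum]
  exact div_mul_cancel_of_imp fun h => le_antisymm (h ▸ hq) hq₀

section

variable {n : ℕ} {K S : Type*} [Fintype K] [Fintype S]
  {Y : Set ((Fin n → ℝ) × (K → ℝ))} {f0 : (Fin n → ℝ) → ℝ} {x : Fin n → ℝ}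

theorem DAOptimal.da0Optimal_sum {C W p : K → S → ℝ} (hC : ∀ k s, 0 ≤ C k s)
    (h : DAOptimal Y f0 C W x p) :
    DA0Optimal Y f0 (fun k => ∑ s, p k s) x (fun k => ∑ s, p k s) := by
  obtain ⟨⟨hmem, hp⟩, hmin⟩ := h
  refine ⟨⟨hmem, fun k => ⟨sum_nonneg fun s _ => (hp k s).1, le_rfl⟩⟩, ?_⟩
  rintro x' q' ⟨hmem', hq'⟩
  choose p' hp'₀ hp'p hp'q using
    fun k => exists_le_sum_eq (fun s => (hp k s).1) (hq' k).1 (hq' k).2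
  have hfeas : DAFeasible Y W x' p' :=
    ⟨(funext hp'q : (fun k => ∑ s, p' k s) = q') ▸ hmem',
      fun k s => ⟨hp'₀ k s, (hp'p k s).trans (hp k s).2⟩⟩
  have hcost : ∑ k, ∑ s, C k s * p' k s ≤ ∑ k, ∑ s, C k s * p k s :=
    sum_le_sum fun k _ => sum_le_sum fun s _ => mul_le_mul_of_nonneg_left (hp'p k s) (hC k s)
  linarith [hmin x' p' hfeas]

theorem DA0Optimal.daOptimal_single [DecidableEq S] (s₀ : S) {W' q : K → ℝ}
    (h : DA0Optimal Y f0 W' x q) :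
    DAOptimal Y f0 0 (fun k => Pi.single s₀ (W' k)) x (fun k => Pi.single s₀ (q k)) := by
  obtain ⟨⟨hmem, hq⟩, hmin⟩ := h
  refine ⟨⟨by simpa using hmem, fun k s =>
    ⟨Pi.single_nonneg (α := fun _ => ℝ) |>.2 (hq k).1 s, Pi.single_mono s₀ (hq k).2 s⟩⟩, ?_⟩
  rintro x' p' ⟨hmem', hp'⟩
  simp only [Pi.zero_apply, zero_mul, sum_const_zero, add_zero]
  refine hmin x' _ ⟨hmem', fun k => ⟨sum_nonneg fun s _ => (hp' k s).1, ?_⟩⟩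
  calc ∑ s, p' k s ≤ ∑ s, Pi.single s₀ (W' k) s := sum_le_sum fun s _ => (hp' k s).2
    _ = W' k := by simp

end

/-- Theorem 1: S^BiD = S^BiD-q, i.e. Problem BiD (jointly optimizing nonnegative
multi-segment bidding prices and quantities) and Problem BiD-q (optimizing only a
single nonnegative bid quantity at zero price) achieve the same expected
system cost. -/
theorem BiD_cost_eq_BiDq_cost {n : ℕ} {K S : Type*} [Fintype K] [Fintype S] [Nonempty S]
    (Y : Set ((Fin n → ℝ) × (K → ℝ))) (f0 : (Fin n → ℝ) → ℝ)
    (G : (Fin n → ℝ) × (K → ℝ) → ℝ) :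
    sInf {v : ℝ | ∃ (C W : K → S → ℝ) (x : Fin n → ℝ) (p : K → S → ℝ),
        (∀ k s, 0 ≤ C k s) ∧ (∀ k s, 0 ≤ W k s) ∧ DAOptimal Y f0 C W x p ∧
        v = G (x, fun k => ∑ s, p k s)} =
    sInf {v : ℝ | ∃ (W' : K → ℝ) (x : Fin n → ℝ) (q : K → ℝ),
        (∀ k, 0 ≤ W' k) ∧ DA0Optimal Y f0 W' x q ∧ v = G (x, q)} := by
  classical
  congr 1
  ext v
  constructor
  · rintro ⟨C, W, x, p, hC, -, hopt, rfl⟩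
    exact ⟨_, x, _, fun k => sum_nonneg fun s _ => (hopt.1.2 k s).1,
      hopt.da0Optimal_sum hC, rfl⟩
  · rintro ⟨W', x, q, hW', hopt, rfl⟩
    obtain ⟨s₀⟩ := ‹Nonempty S›
    exact ⟨0, _, x, _, fun _ _ => le_rfl,
      fun k => Pi.single_nonneg (α := fun _ => ℝ) |>.2 (hW' k),
      hopt.daOptimal_single s₀, by simp⟩
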